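/- Let $\lambda \in \mathbb{C}$, let $a_n = \binom{\lambda}{n}$ (the generalized binomial coefficient), and let $d_n^{(k)} = \det(a_{i+j+k-2})_{1 \le i,j \le n}$. Then $d_n^{(k)} = (-1)^{nk} \prod_{1 \le i \le j \le n-1} \frac{(i-\lambda-1)(i+\lambda)}{(i+j-1)(i+j)} \times \prod_{j=0}^{k-1}\prod_{i=1}^{n} \frac{i+j-\lambda-1}{i+j+n-1}$. -/

import Mathlib

open Finset

/-- Generalized binomial coefficient `λ choose n` for complex `λ`. -/
noncomputable def cchoose (lam : ℂ) (n : ℕ) : ℂ :=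
  (∏ s ∈ Finset.range n, (lam - s)) / (n.factorial : ℂ)

/-!
Multiplying the Hankel matrix `(C(λ, i + j + k))` on the left by a lower bidiagonal matrix with
diagonal `1, k + 1, …, k + m`, each row is combined with the one above it through the contiguous
relation `(a + 1) C(λ, N + 1) - (λ - a) C(λ, N) = (a - N) C(λ + 1, N + 1)`. This clears the first
column below `C(λ, k)` and leaves `-(j + 1)` times the Hankel matrix of `λ + 1` shifted by two,
so with rising factorials `(x)_m`,
`(k + 1)_m d_{m+1}^{(k)}(λ) = C(λ, k) (-1)^m m! d_m^{(k+2)}(λ + 1)`.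
Together with `d_0 = 1` this determines every determinant, and the closed form satisfies the
same recursion: the step `k → k + 1` multiplies both sides by the same factor, and for `k = 0`
the identity telescopes in `m`.
-/

open Polynomial

section Pochhammer

variable {R : Type*} [CommSemiring R]

lemma ascPochhammer_eval_eq_prod_range (a : R) (n : ℕ) :
    (ascPochhammer R n).eval a = ∏ s ∈ range n, (a + s) := by
  induction n with
  | zero => simp
  | succ n ih => rw [ascPochhammer_succ_eval, ih, prod_range_succ]

lemma ascPochhammer_eval_succ_left (a : R) (n : ℕ) :
    (ascPochhammer R (n + 1)).eval a = a * (ascPochhammer R n).eval (a + 1) := by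
  simp [ascPochhammer_succ_left, eval_comp]

lemma ascPochhammer_eval_natCast_add_one_ne_zero (c m : ℕ) :
    (ascPochhammer ℂ m).eval ((c : ℂ) + 1) ≠ 0 := by
  rw [← Nat.cast_add_one, ← ascPochhammer_eval_cast]
  exact_mod_cast (ascPochhammer_pos m (c + 1) c.succ_pos).ne'

end Pochhammer

section cchoose

@[simp] lemma cchoose_zero (lam : ℂ) : cchoose lam 0 = 1 := by simp [cchoose]

lemma natCast_add_one_mul_cchoose_succ (lam : ℂ) (m : ℕ) :
    ((m : ℂ) + 1) * cchoose lam (m + 1) = (lam - m) * cchoose lam m := by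
  have : (m.factorial : ℂ) ≠ 0 := by exact_mod_cast m.factorial_ne_zero
  simp only [cchoose, prod_range_succ, Nat.factorial_succ]
  push_cast
  field_simp

lemma natCast_add_one_mul_cchoose_add_one_succ (lam : ℂ) (m : ℕ) :
    ((m : ℂ) + 1) * cchoose (lam + 1) (m + 1) = (lam + 1) * cchoose lam m := by
  have : (m.factorial : ℂ) ≠ 0 := by exact_mod_cast m.factorial_ne_zero
  simp only [cchoose, prod_range_succ', Nat.factorial_succ]
  push_cast
  simp only [add_sub_add_right_eq_sub, sub_zero]
  field_simp

lemma cchoose_contiguous (lam a : ℂ) (N : ℕ) :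
    (a + 1) * cchoose lam (N + 1) - (lam - a) * cchoose lam N =
      (a - N) * cchoose (lam + 1) (N + 1) := by
  have hN : (N : ℂ) + 1 ≠ 0 := by exact_mod_cast N.succ_ne_zero
  apply mul_left_cancel₀ hN
  linear_combination (a + 1) * natCast_add_one_mul_cchoose_succ lam N -
    (a - N) * natCast_add_one_mul_cchoose_add_one_succ lam N

end cchoose

section Hankel

open Matrix

noncomputable def binomHankel (n k : ℕ) (lam : ℂ) : Matrix (Fin n) (Fin n) ℂ :=
  of fun i j => cchoose lam ((i : ℕ) + (j : ℕ) + k)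

noncomputable def hankelReduction (m k : ℕ) (lam : ℂ) : Matrix (Fin (m + 1)) (Fin (m + 1)) ℂ :=
  of fun i t =>
    if t = i then (if (i : ℕ) = 0 then 1 else (i : ℂ) + k)
    else if (t : ℕ) + 1 = i then (i : ℂ) + k - 1 - lam else 0

lemma det_hankelReduction (m k : ℕ) (lam : ℂ) :
    (hankelReduction m k lam).det = (ascPochhammer ℂ m).eval ((k : ℂ) + 1) := by
  have hlower : (hankelReduction m k lam).IsLowerTriangular := by
    intro i t (hit : (i : ℕ) < t)
    simp only [hankelReduction, of_apply]
    rw [if_neg (by omega), if_neg (by omega)]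
  rw [det_of_isLowerTriangular _ hlower, Fin.prod_univ_succ, ascPochhammer_eval_eq_prod_range,
    ← Fin.prod_univ_eq_prod_range]
  simp only [hankelReduction, of_apply, if_true, Fin.val_zero, Fin.val_succ, one_mul,
    Nat.succ_ne_zero, if_false]
  refine prod_congr rfl fun i _ => ?_
  push_cast
  ring

lemma hankelReduction_mul_binomHankel (m k : ℕ) (lam : ℂ) :
    hankelReduction m k lam * binomHankel (m + 1) k lam = of fun i j : Fin (m + 1) =>
      if (i : ℕ) = 0 then cchoose lam ((j : ℕ) + k)
      else -(j : ℂ) * cchoose (lam + 1) ((i : ℕ) + (j : ℕ) + k) := by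
  ext i j
  rw [mul_apply]
  rcases Fin.eq_zero_or_eq_succ i with rfl | ⟨i, rfl⟩
  · simp [hankelReduction, binomHankel]
  · rw [Fintype.sum_eq_add i.succ i.castSucc Fin.castSucc_lt_succ.ne' fun t ht => ?_]
    · have hne : i.castSucc ≠ i.succ := Fin.castSucc_lt_succ.ne
      simp only [hankelReduction, binomHankel, of_apply, if_neg hne, Fin.val_succ,
        Fin.val_castSucc, Nat.succ_ne_zero, if_false, if_true]
      have h := cchoose_contiguous lam ((i : ℂ) + k) ((i : ℕ) + j + k)
      rw [show (i : ℕ) + 1 + j + k = (i : ℕ) + j + k + 1 by omega]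
      push_cast at h ⊢
      linear_combination h
    · have : (t : ℕ) + 1 ≠ (i.succ : ℕ) := fun h => ht.2 (Fin.ext (by simp at h ⊢; omega))
      simp only [hankelReduction, of_apply, if_neg ht.1, if_neg this, zero_mul]

lemma det_binomHankel_succ (m k : ℕ) (lam : ℂ) :
    (ascPochhammer ℂ m).eval ((k : ℂ) + 1) * (binomHankel (m + 1) k lam).det =
      cchoose lam k * ((-1) ^ m * m.factorial) * (binomHankel m (k + 2) (lam + 1)).det := by
  have hminor : (hankelReduction m k lam * binomHankel (m + 1) k lam).submatrix
      (0 : Fin (m + 1)).succAbove Fin.succ =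
      of fun i j : Fin m => (-((j : ℂ) + 1)) * binomHankel m (k + 2) (lam + 1) i j := by
    ext i j
    rw [hankelReduction_mul_binomHankel]
    simp only [submatrix_apply, Fin.zero_succAbove, of_apply, Fin.val_succ, Nat.succ_ne_zero,
      if_false, binomHankel]
    rw [show (i : ℕ) + 1 + ((j : ℕ) + 1) + k = i + j + (k + 2) by omega]
    push_cast
    ring
  have hsigns : ∏ j : Fin m, (-((j : ℂ) + 1)) = (-1) ^ m * m.factorial := by
    rw [prod_neg, card_univ, Fintype.card_fin, Fin.prod_univ_eq_prod_range (fun j => (j : ℂ) + 1),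
      ← ascPochhammer_eval_one, ascPochhammer_eval_eq_prod_range]
    simp only [add_comm]
  rw [← det_hankelReduction, ← det_mul, det_succ_column_zero, Fin.sum_univ_succ, hminor,
    det_mul_row, hsigns]
  simp only [hankelReduction_mul_binomHankel, of_apply, Fin.val_zero, Fin.val_succ, ↓reduceIte,
    Nat.succ_ne_zero, pow_zero, one_mul, zero_add, add_zero, CharP.cast_eq_zero,
    neg_zero, zero_mul, mul_zero, sum_const_zero]
  ring

end Hankel

section Formula

noncomputable def hankelFactor (lam : ℂ) (j : ℕ) : ℂ :=
  (ascPochhammer ℂ j).eval (-lam) * (ascPochhammer ℂ j).eval (lam + 1) /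
    ((ascPochhammer ℂ j).eval (j : ℂ) * (ascPochhammer ℂ j).eval ((j : ℂ) + 1))

noncomputable def shiftFactor (lam : ℂ) (n j : ℕ) : ℂ :=
  (ascPochhammer ℂ n).eval ((j : ℂ) - lam) / (ascPochhammer ℂ n).eval ((j : ℂ) + n)

noncomputable def binomHankelFormula (n k : ℕ) (lam : ℂ) : ℂ :=
  (-1) ^ (n * k) * (∏ j ∈ range n, hankelFactor lam j) * ∏ j ∈ range k, shiftFactor lam n j

lemma binomHankelFormula_succ_right (n k : ℕ) (lam : ℂ) :
    binomHankelFormula n (k + 1) lam =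
      binomHankelFormula n k lam * ((-1) ^ n * shiftFactor lam n k) := by
  simp only [binomHankelFormula, prod_range_succ, mul_add, pow_add, mul_one]
  ring

lemma prod_range_succ_hankelFactor (m : ℕ) (lam : ℂ) :
    ∏ j ∈ range (m + 1), hankelFactor lam j =
      (-1) ^ m * (∏ j ∈ range m, hankelFactor (lam + 1) j) *
        (shiftFactor (lam + 1) m 0 * shiftFactor (lam + 1) m 1) := by
  induction m with
  | zero => simp [hankelFactor, shiftFactor]
  | succ m ih =>
    -- the denominators on both sides agree, and the numerators differ by two Pochhammer steps
    have key : shiftFactor (lam + 1) m 0 * shiftFactor (lam + 1) m 1 * hankelFactor lam (m + 1) =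
        -(hankelFactor (lam + 1) m *
          (shiftFactor (lam + 1) (m + 1) 0 * shiftFactor (lam + 1) (m + 1) 1)) := by
      simp only [hankelFactor, shiftFactor]
      push_cast
      rw [zero_sub, zero_add, zero_add, ascPochhammer_eval_succ_left (lam + 1),
        ascPochhammer_eval_succ_left (-(lam + 1)), show -(lam + 1) + 1 = -lam by ring,
        show (1 : ℂ) - (lam + 1) = -lam by ring,
        add_comm (1 : ℂ) (m : ℂ), add_comm (1 : ℂ) ((m : ℂ) + 1)]
      ring
    rw [prod_range_succ, ih, prod_range_succ, pow_succ]
    linear_combination (-1) ^ m * (∏ j ∈ range m, hankelFactor (lam + 1) j) * key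

lemma shiftFactor_succ_mul (lam : ℂ) (m j : ℕ) :
    shiftFactor lam (m + 1) j * (ascPochhammer ℂ (m + 1)).eval ((j : ℂ) + 1) =
      ((j : ℂ) - lam) * (ascPochhammer ℂ m).eval ((j : ℂ) + 1) *
        shiftFactor (lam + 1) m (j + 2) := by
  have hne : (j : ℂ) + (m + 1) ≠ 0 := by exact_mod_cast (j + (m + 1)).succ_ne_zero
  simp only [shiftFactor]
  push_cast
  rw [ascPochhammer_eval_succ_left ((j : ℂ) - lam),
    ascPochhammer_eval_succ_left ((j : ℂ) + (m + 1)), ascPochhammer_succ_eval m ((j : ℂ) + 1), show (j : ℂ) - lam + 1 = j + 2 - (lam + 1) by ring,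
    show (j : ℂ) + (m + 1) + 1 = j + 2 + m by ring]
  field_simp
  ring

lemma binomHankelFormula_succ (m k : ℕ) (lam : ℂ) :
    (ascPochhammer ℂ m).eval ((k : ℂ) + 1) * binomHankelFormula (m + 1) k lam =
      cchoose lam k * ((-1) ^ m * m.factorial) * binomHankelFormula m (k + 2) (lam + 1) := by
  induction k with
  | zero =>
    rw [binomHankelFormula, binomHankelFormula, prod_range_succ_hankelFactor]
    simp only [CharP.cast_eq_zero, zero_add, ascPochhammer_eval_one, cchoose_zero, mul_zero,
      pow_zero, one_mul, mul_one, range_zero, prod_empty, mul_comm m 2, pow_mul, even_two,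
      Even.neg_pow, one_pow, prod_range_succ, range_one, prod_singleton]
    ring
  | succ k ih =>
    have hk : ((k : ℂ) + 1) * (ascPochhammer ℂ m).eval ((k : ℂ) + 1) ≠ 0 :=
      mul_ne_zero (by exact_mod_cast k.succ_ne_zero)
        (ascPochhammer_eval_natCast_add_one_ne_zero k m)
    have hstep : (ascPochhammer ℂ (m + 1)).eval ((k : ℂ) + 1) =
        ((k : ℂ) + 1) * (ascPochhammer ℂ m).eval ((k : ℂ) + 1 + 1) :=
      ascPochhammer_eval_succ_left _ _
    apply mul_left_cancel₀ hk
    rw [binomHankelFormula_succ_right, binomHankelFormula_succ_right m (k + 2)]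
    push_cast
    linear_combination
      (-(-1) ^ (m + 1) * shiftFactor lam (m + 1) k * binomHankelFormula (m + 1) k lam *
          (ascPochhammer ℂ m).eval ((k : ℂ) + 1)) * hstep +
        ((-1) ^ (m + 1) * shiftFactor lam (m + 1) k *
          (ascPochhammer ℂ (m + 1)).eval ((k : ℂ) + 1)) * ih +
        ((-1) ^ (m + 1) * cchoose lam k * ((-1) ^ m * m.factorial) *
          binomHankelFormula m (k + 2) (lam + 1)) * shiftFactor_succ_mul lam m k -
        ((ascPochhammer ℂ m).eval ((k : ℂ) + 1) * ((-1) ^ m * m.factorial) *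
          binomHankelFormula m (k + 2) (lam + 1) * (-1) ^ m * shiftFactor (lam + 1) m (k + 2)) *
          natCast_add_one_mul_cchoose_succ lam k

end Formula

lemma prod_Icc_one_eq_prod_range {M : Type*} [CommMonoid M] (f : ℕ → M) (n : ℕ) :
    ∏ i ∈ Icc 1 n, f i = ∏ i ∈ range n, f (i + 1) := by
  rw [← Finset.Ico_add_one_right_eq_Icc, prod_Ico_eq_prod_range, Nat.add_sub_cancel]
  simp only [add_comm]

lemma det_binomHankel (n k : ℕ) (lam : ℂ) :
    (binomHankel n k lam).det = binomHankelFormula n k lam := by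
  induction n generalizing k lam with
  | zero => simp [binomHankelFormula, shiftFactor]
  | succ m ih =>
    apply mul_left_cancel₀ (ascPochhammer_eval_natCast_add_one_ne_zero k m)
    rw [det_binomHankel_succ, binomHankelFormula_succ, ih]

theorem stmt15 (lam : ℂ) (n k : ℕ) :
    (Matrix.of fun i j : Fin n => cchoose lam ((i : ℕ) + (j : ℕ) + k)).det =
      (-1) ^ (n * k) *
        (∏ j ∈ Finset.Icc 1 (n - 1), ∏ i ∈ Finset.Icc 1 j,
          (((i : ℂ) - lam - 1) * ((i : ℂ) + lam)) / (((i : ℂ) + j - 1) * ((i : ℂ) + j))) *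
        ∏ j ∈ Finset.range k, ∏ i ∈ Finset.Icc 1 n,
          ((i : ℂ) + j - lam - 1) / ((i : ℂ) + j + n - 1) := by
  have hhankel (j : ℕ) : ∏ i ∈ Icc 1 j,
      (((i : ℂ) - lam - 1) * ((i : ℂ) + lam)) / (((i : ℂ) + j - 1) * ((i : ℂ) + j)) =
        hankelFactor lam j := by
    simp only [hankelFactor, ascPochhammer_eval_eq_prod_range, prod_Icc_one_eq_prod_range,
      ← prod_mul_distrib, ← prod_div_distrib]
    refine prod_congr rfl fun i _ => ?_
    push_cast
    ring
  have hshift (j : ℕ) : ∏ i ∈ Icc 1 n, ((i : ℂ) + j - lam - 1) / ((i : ℂ) + j + n - 1) =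
      shiftFactor lam n j := by
    simp only [shiftFactor, ascPochhammer_eval_eq_prod_range, prod_Icc_one_eq_prod_range,
      ← prod_div_distrib]
    refine prod_congr rfl fun i _ => ?_
    push_cast
    ring
  have hconst : ∏ j ∈ Icc 1 (n - 1), hankelFactor lam j = ∏ j ∈ range n, hankelFactor lam j := by
    rcases n with _ | m
    · rfl
    · rw [prod_Icc_one_eq_prod_range, Nat.add_sub_cancel, prod_range_succ']
      simp [hankelFactor]
  simp only [hhankel, hshift, hconst]
  exact det_binomHankel n k lam
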